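/- Consider the set-cover gadget graph for an instance (U, 𝒮) with |U| = m and parameter L ≥ 1. Let λ be a temporal labeling of the gadget graph under which the terminal r is temporally reachable from every element node t_j, and let F denote the number of indices i ∈ [n] whose chain is fully labeled, i.e., each of the L+1 chain edges {s_i, w_{i,1}}, …, {w_{i,L}, r} carries at least one label under λ. Then the cost of λ satisfies |λ| ≥ m + (L+1)·F. -/

import Mathlib

/-- A temporal path from `u` to `w`: `p` temporal edges with strictly increasing
timestamps. -/
def IsTemporalPath {V : Type*} (E : Set (Sym2 V × ℕ)) (u w : V)
    (p : ℕ) (vtx : Fin (p + 1) → V) (ts : Fin p → ℕ) : Prop :=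
  vtx 0 = u ∧ vtx (Fin.last p) = w ∧ StrictMono ts ∧
    ∀ i : Fin p, (s(vtx i.castSucc, vtx i.succ), ts i) ∈ E

/-- `w` is temporally reachable from `u`. -/
def TemporallyReachable {V : Type*} (E : Set (Sym2 V × ℕ)) (u w : V) : Prop :=
  u = w ∨ ∃ (p : ℕ) (vtx : Fin (p + 1) → V) (ts : Fin p → ℕ),
    IsTemporalPath E u w p vtx ts

/-- The nodes of the set-cover gadget graph: the terminal `r`, a set node `s i` for each
`i ∈ [n]`, an element node `t j` for each `j ∈ [m]`, and chain nodes `w i k` for each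
`i ∈ [n]` and `k : Fin L` (the node `w i k` represents the paper's `w_{i,k+1}`). -/
inductive GV (n m L : ℕ) : Type
  | r : GV n m L
  | s (i : Fin n) : GV n m L
  | t (j : Fin m) : GV n m L
  | w (i : Fin n) (k : Fin L) : GV n m L
  deriving DecidableEq, Fintype

/-- The edge set of the set-cover gadget graph: `{t j, s i}` whenever `u_j ∈ S_i`, and
for each `i` the `L+1` chain edges `{s_i, w_{i,1}}, {w_{i,1}, w_{i,2}}, …,
{w_{i,L-1}, w_{i,L}}, {w_{i,L}, r}`. -/
def gadgetEdges (n m L : ℕ) (S : Fin n → Finset (Fin m)) : Set (Sym2 (GV n m L)) :=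
  {e | (∃ i j, j ∈ S i ∧ e = s(GV.t j, GV.s i)) ∨
       (∃ (i : Fin n) (k : Fin L), (k : ℕ) = 0 ∧ e = s(GV.s i, GV.w i k)) ∨
       (∃ (i : Fin n) (k k' : Fin L), (k' : ℕ) = (k : ℕ) + 1 ∧
          e = s(GV.w i k, GV.w i k')) ∨
       (∃ (i : Fin n) (k : Fin L), (k : ℕ) = L - 1 ∧ e = s(GV.w i k, GV.r))}

/-- The temporal edges induced by a temporal labeling `lab` of a static graph with edge
set `E`. -/
def inducedTemporal {V : Type*} (E : Set (Sym2 V)) (lab : Sym2 V → Finset ℕ) :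
    Set (Sym2 V × ℕ) :=
  {q | q.1 ∈ E ∧ q.2 ∈ lab q.1}

/-- The cost `|λ|` of a temporal labeling: the total number of assigned timestamps. -/
def labCost {n m L : ℕ} (lab : Sym2 (GV n m L) → Finset ℕ) : ℕ :=
  ∑ e : Sym2 (GV n m L), (lab e).card

/-!
Each element node `t_j` differs from `r`, so a temporal path from `t_j` to `r` starts with a
labeled edge at `t_j`, which in the gadget is an edge `{t_j, s_i}`; choosing one per `j` gives
`m` distinct labeled edges. A fully labeled chain contributes its `L + 1` chain edges, which are
distinct from each other, from the edges of other chains and from the element edges. Every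
labeled edge costs at least one timestamp.
-/

theorem TemporallyReachable.exists_mem_of_ne {V : Type*} {E : Set (Sym2 V × ℕ)} {u w : V}
    (h : TemporallyReachable E u w) (huw : u ≠ w) : ∃ v τ, (s(u, v), τ) ∈ E := by
  rcases h with h | ⟨p, vtx, ts, h0, hlast, -, hmem⟩
  · exact absurd h huw
  cases p with
  | zero => exact absurd (h0.symm.trans hlast) huw
  | succ p => exact ⟨vtx 1, ts 0, by simpa [h0] using hmem 0⟩

theorem card_le_labCost {n m L : ℕ} {lab : Sym2 (GV n m L) → Finset ℕ}
    {T : Finset (Sym2 (GV n m L))} (hT : ∀ e ∈ T, (lab e).Nonempty) :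
    T.card ≤ labCost lab :=
  calc T.card = ∑ _e ∈ T, 1 := by simp
    _ ≤ ∑ e ∈ T, (lab e).card := Finset.sum_le_sum fun e he => (hT e he).card_pos
    _ ≤ labCost lab := Finset.sum_le_sum_of_subset (Finset.subset_univ T)

namespace GV

variable {n m L : ℕ}

theorem eq_s_of_mem_gadgetEdges {S : Fin n → Finset (Fin m)} {j : Fin m} {v : GV n m L}
    (h : s(t j, v) ∈ gadgetEdges n m L S) : ∃ i, v = s i := by
  rcases h with ⟨i, j', -, he⟩ | ⟨i, k, -, he⟩ | ⟨i, k, k', -, he⟩ | ⟨i, k, -, he⟩ <;>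
    simp only [Sym2.eq_iff, reduceCtorEq, false_and, or_false] at he
  exact ⟨i, he.2⟩

theorem exists_labeled_elementEdge {S : Fin n → Finset (Fin m)}
    {lab : Sym2 (GV n m L) → Finset ℕ} {j : Fin m}
    (h : TemporallyReachable (inducedTemporal (gadgetEdges n m L S) lab) (t j) r) :
    ∃ i, (lab s(t j, s i)).Nonempty := by
  obtain ⟨v, τ, hv, hτ⟩ := h.exists_mem_of_ne (by simp)
  obtain ⟨i, rfl⟩ := eq_s_of_mem_gadgetEdges hv
  exact ⟨i, τ, hτ⟩

def chainEdge (hL : 1 ≤ L) (i : Fin n) (k : Fin (L + 1)) : Sym2 (GV n m L) :=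
  if (k : ℕ) = 0 then s(s i, w i ⟨0, hL⟩)
  else if hkL : (k : ℕ) = L then s(w i ⟨L - 1, by omega⟩, r)
  else s(w i ⟨k - 1, by omega⟩, w i ⟨k, by omega⟩)

theorem chainEdge_injective (hL : 1 ≤ L) :
    Function.Injective fun p : Fin n × Fin (L + 1) => chainEdge (m := m) hL p.1 p.2 := by
  rintro ⟨i, k⟩ ⟨i', k'⟩ h
  have hk := k.isLt
  have hk' := k'.isLt
  simp only [chainEdge] at h
  split_ifs at h <;>
    simp only [Sym2.eq_iff, Prod.ext_iff, Fin.ext_iff, w.injEq, s.injEq, reduceCtorEq,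
      and_false, false_and, or_false] at h ⊢ <;> omega

theorem chainEdge_ne_elementEdge (hL : 1 ≤ L) (i i' : Fin n) (k : Fin (L + 1)) (j : Fin m) :
    chainEdge hL i k ≠ s(t j, s i') := by
  unfold chainEdge
  split_ifs <;> simp

theorem chainEdge_nonempty {lab : Sym2 (GV n m L) → Finset ℕ} (hL : 1 ≤ L) {i : Fin n}
    (hi : (lab s(s i, w i ⟨0, hL⟩)).Nonempty ∧
      (∀ (k : ℕ) (_ : 1 ≤ k) (hk : k ≤ L - 1),
        (lab s(w i ⟨k - 1, Nat.sub_lt_of_lt (Nat.lt_of_le_sub_one hL hk)⟩,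
          w i ⟨k, Nat.lt_of_le_sub_one hL hk⟩)).Nonempty) ∧
      (lab s(w i ⟨L - 1, Nat.sub_one_lt_of_lt hL⟩, r)).Nonempty)
    (k : Fin (L + 1)) : (lab (chainEdge hL i k)).Nonempty := by
  obtain ⟨h0, hmid, hlast⟩ := hi
  unfold chainEdge
  split_ifs
  · exact h0
  · exact hlast
  · exact hmid k (by omega) (by omega)

end GV

/-- let `lab` be a temporal labeling of the gadget graph under which `r`
is temporally reachable from every element node, and let `F` be the number of indices
`i` whose chain is fully labeled (each of the `L+1` chain edges carries at least one
label).  Then the cost of `lab` is at least `m + (L+1)·F`. -/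
theorem feasible_labeling_cost_lower_bound (n m L : ℕ) (hL : 1 ≤ L)
    (S : Fin n → Finset (Fin m))
    (lab : Sym2 (GV n m L) → Finset ℕ)
    (hreach : ∀ j : Fin m, TemporallyReachable (inducedTemporal (gadgetEdges n m L S) lab)
      (GV.t j) GV.r)
    (F : ℕ)
    (hF : F = Set.ncard {i : Fin n |
      (lab s(GV.s i, GV.w i ⟨0, by omega⟩)).Nonempty ∧
      (∀ (k : ℕ) (_h1 : 1 ≤ k) (_h2 : k ≤ L - 1),
        (lab s(GV.w i ⟨k - 1, by omega⟩, GV.w i ⟨k, by omega⟩)).Nonempty) ∧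
      (lab s(GV.w i ⟨L - 1, by omega⟩, GV.r)).Nonempty}) :
    m + (L + 1) * F ≤ labCost lab := by
  classical
  choose f hf using fun j => GV.exists_labeled_elementEdge (hreach j)
  obtain ⟨C, hFC, hC⟩ : ∃ C : Finset (Fin n), F = C.card ∧
      ∀ i ∈ C, ∀ k, (lab (GV.chainEdge hL i k)).Nonempty :=
    ⟨_, hF.trans (Set.ncard_eq_toFinset_card' _),
      fun i hi => GV.chainEdge_nonempty hL (by simpa using hi)⟩
  let elementEdges : Finset (Sym2 (GV n m L)) :=
    Finset.univ.image fun j => s(GV.t j, GV.s (f j))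
  let chainEdges := (C ×ˢ Finset.univ).image fun p => GV.chainEdge (m := m) hL p.1 p.2
  have helement : elementEdges.card = m := by
    rw [Finset.card_image_of_injective _ fun j j' h => by simp_all]
    simp
  have hchain : chainEdges.card = (L + 1) * F := by
    rw [Finset.card_image_of_injective _ (GV.chainEdge_injective hL), Finset.card_product, hFC]
    simp [mul_comm]
  have hdisj : Disjoint elementEdges chainEdges := by
    simp only [elementEdges, chainEdges, Finset.disjoint_left, Finset.mem_image]
    rintro _ ⟨j, -, rfl⟩ ⟨⟨i, k⟩, -, h⟩
    exact GV.chainEdge_ne_elementEdge hL i (f j) k j h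
  calc m + (L + 1) * F = (elementEdges ∪ chainEdges).card := by
        rw [Finset.card_union_of_disjoint hdisj, helement, hchain]
    _ ≤ labCost lab := card_le_labCost <| by
        simp only [elementEdges, chainEdges, Finset.mem_union, Finset.mem_image]
        rintro _ (⟨j, -, rfl⟩ | ⟨⟨i, k⟩, hik, rfl⟩)
        · exact hf j
        · exact hC i (Finset.mem_product.1 hik).1 k
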